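/- For any real constants L_3, L_4, L_5, L_6, L_7, L_8, L_9, L_{10}, the function h : [0,∞) → ℝ defined by h(η) = −[L_4/2 + 3L_7/4 + 7L_9/4 + L_5/6 + (L_3 + L_6 + 2L_8 + 6L_{10}) η + (L_6/2 + L_8 + 3L_{10}) η² + (L_8/3 + L_{10}) η³ + (L_{10}/4) η⁴] e^{−η} + [L_4/2 + 3L_7/4 + 7L_9/4 + (L_7/2 + 3L_9/2) η + (L_9/2) η²] e^{−2η} + (L_5/6) e^{−3η} satisfies the second-order linear ODE h''(η) + h'(η) = (L_3 + L_6 η + L_8 η² + L_{10} η³) e^{−η} + (L_4 + L_7 η + L_9 η²) e^{−2η} + L_5 e^{−3η} for all η ≥ 0, together with h(0) = 0 and h(η) → 0 as η → ∞. -/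

import Mathlib

open Filter Real

private lemma hasDerivAt_G (a0 a1 a2 a3 a4 b0 b1 b2 c : ℝ) (x : ℝ) :
    HasDerivAt (fun x : ℝ =>
        (a0 + a1 * x + a2 * x ^ 2 + a3 * x ^ 3 + a4 * x ^ 4) * Real.exp (-x)
          + (b0 + b1 * x + b2 * x ^ 2) * Real.exp (-2 * x)
          + c * Real.exp (-3 * x))
      ((a1 - a0 + (2 * a2 - a1) * x + (3 * a3 - a2) * x ^ 2 + (4 * a4 - a3) * x ^ 3
            + (-a4) * x ^ 4) * Real.exp (-x)
        + (b1 - 2 * b0 + (2 * b2 - 2 * b1) * x + (-2 * b2) * x ^ 2) * Real.exp (-2 * x)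
        + (-3 * c) * Real.exp (-3 * x)) x := by
  have e1 : HasDerivAt (fun y : ℝ => Real.exp (-y)) (-Real.exp (-x)) x := by
    simpa using (hasDerivAt_neg x).exp
  have e2 : HasDerivAt (fun y : ℝ => Real.exp (-2 * y)) (-2 * Real.exp (-2 * x)) x := by
    have h2 : HasDerivAt (fun y : ℝ => -2 * y) (-2 : ℝ) x := by
      simpa using (hasDerivAt_id x).const_mul (-2 : ℝ)
    simpa [mul_comm] using h2.exp
  have e3 : HasDerivAt (fun y : ℝ => Real.exp (-3 * y)) (-3 * Real.exp (-3 * x)) x := by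
    have h3 : HasDerivAt (fun y : ℝ => -3 * y) (-3 : ℝ) x := by
      simpa using (hasDerivAt_id x).const_mul (-3 : ℝ)
    simpa [mul_comm] using h3.exp
  have hp4 : HasDerivAt (fun y : ℝ => a0 + a1 * y + a2 * y ^ 2 + a3 * y ^ 3 + a4 * y ^ 4)
      (a1 + 2 * a2 * x + 3 * a3 * x ^ 2 + 4 * a4 * x ^ 3) x := by
    have := ((((hasDerivAt_const x a0).add ((hasDerivAt_id' x).const_mul a1)).add
        ((hasDerivAt_pow 2 x).const_mul a2)).add ((hasDerivAt_pow 3 x).const_mul a3)).add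
        ((hasDerivAt_pow 4 x).const_mul a4)
    convert this using 1
    · rfl
    · rfl
    · rfl
    · push_cast; ring
  have hp2 : HasDerivAt (fun y : ℝ => b0 + b1 * y + b2 * y ^ 2)
      (b1 + 2 * b2 * x) x := by
    have := ((hasDerivAt_const x b0).add ((hasDerivAt_id' x).const_mul b1)).add
        ((hasDerivAt_pow 2 x).const_mul b2)
    convert this using 1
    · rfl
    · rfl
    · rfl
    · push_cast; ring
  have := ((hp4.mul e1).add (hp2.mul e2)).add (e3.const_mul c)
  convert this using 1
  · rfl
  · rfl
  · rfl
  · ring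

/-- Second-order OHAM correction for the temperature: the function
`h η = −[L₄/2 + 3L₇/4 + 7L₉/4 + L₅/6 + (L₃ + L₆ + 2L₈ + 6L₁₀) η
        + (L₆/2 + L₈ + 3L₁₀) η² + (L₈/3 + L₁₀) η³ + (L₁₀/4) η⁴] e^(−η)
      + [L₄/2 + 3L₇/4 + 7L₉/4 + (L₇/2 + 3L₉/2) η + (L₉/2) η²] e^(−2η)
      + (L₅/6) e^(−3η)`
solves
`h'' + h' = (L₃ + L₆ η + L₈ η² + L₁₀ η³) e^(−η) + (L₄ + L₇ η + L₉ η²) e^(−2η) + L₅ e^(−3η)`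
on `[0,∞)`, with `h 0 = 0` and `h η → 0` as `η → ∞`. -/
theorem oham_second_order_temperature (L3 L4 L5 L6 L7 L8 L9 L10 : ℝ) (h : ℝ → ℝ)
    (hh : ∀ η : ℝ, h η =
      -(L4 / 2 + 3 * L7 / 4 + 7 * L9 / 4 + L5 / 6
          + (L3 + L6 + 2 * L8 + 6 * L10) * η
          + (L6 / 2 + L8 + 3 * L10) * η ^ 2
          + (L8 / 3 + L10) * η ^ 3
          + (L10 / 4) * η ^ 4) * Real.exp (-η)
        + (L4 / 2 + 3 * L7 / 4 + 7 * L9 / 4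
            + (L7 / 2 + 3 * L9 / 2) * η + (L9 / 2) * η ^ 2) * Real.exp (-2 * η)
        + (L5 / 6) * Real.exp (-3 * η)) :
    (∀ η : ℝ, 0 ≤ η →
        deriv (deriv h) η + deriv h η =
          (L3 + L6 * η + L8 * η ^ 2 + L10 * η ^ 3) * Real.exp (-η)
            + (L4 + L7 * η + L9 * η ^ 2) * Real.exp (-2 * η)
            + L5 * Real.exp (-3 * η)) ∧
      h 0 = 0 ∧ Tendsto h atTop (nhds 0) := by
  set a0 : ℝ := -(L4 / 2 + 3 * L7 / 4 + 7 * L9 / 4 + L5 / 6) with ha0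
  set a1 : ℝ := -(L3 + L6 + 2 * L8 + 6 * L10) with ha1
  set a2 : ℝ := -(L6 / 2 + L8 + 3 * L10) with ha2
  set a3 : ℝ := -(L8 / 3 + L10) with ha3
  set a4 : ℝ := -(L10 / 4) with ha4
  set b0 : ℝ := L4 / 2 + 3 * L7 / 4 + 7 * L9 / 4 with hb0
  set b1 : ℝ := L7 / 2 + 3 * L9 / 2 with hb1
  set b2 : ℝ := L9 / 2 with hb2
  have hfun : h = fun x : ℝ =>
      (a0 + a1 * x + a2 * x ^ 2 + a3 * x ^ 3 + a4 * x ^ 4) * Real.exp (-x)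
        + (b0 + b1 * x + b2 * x ^ 2) * Real.exp (-2 * x)
        + (L5 / 6) * Real.exp (-3 * x) := by
    funext x
    rw [hh x, ha0, ha1, ha2, ha3, ha4, hb0, hb1, hb2]
    ring
  have hd1 : ∀ x : ℝ, HasDerivAt h
      ((a1 - a0 + (2 * a2 - a1) * x + (3 * a3 - a2) * x ^ 2 + (4 * a4 - a3) * x ^ 3
            + (-a4) * x ^ 4) * Real.exp (-x)
        + (b1 - 2 * b0 + (2 * b2 - 2 * b1) * x + (-b2 * 2) * x ^ 2) * Real.exp (-2 * x)
        + (-3 * (L5 / 6)) * Real.exp (-3 * x)) x := by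
    intro x
    rw [hfun]
    have := hasDerivAt_G a0 a1 a2 a3 a4 b0 b1 b2 (L5 / 6) x
    convert this using 1
    ring
  have hD1 : deriv h = fun x : ℝ =>
      ((a1 - a0) + (2 * a2 - a1) * x + (3 * a3 - a2) * x ^ 2 + (4 * a4 - a3) * x ^ 3
            + (-a4) * x ^ 4) * Real.exp (-x)
        + ((b1 - 2 * b0) + (2 * b2 - 2 * b1) * x + (-b2 * 2) * x ^ 2) * Real.exp (-2 * x)
        + (-3 * (L5 / 6)) * Real.exp (-3 * x) := by
    funext x
    exact (hd1 x).deriv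
  have hd2 : ∀ x : ℝ, HasDerivAt (deriv h)
      (((2 * a2 - a1) - (a1 - a0) + (2 * (3 * a3 - a2) - (2 * a2 - a1)) * x
            + (3 * (4 * a4 - a3) - (3 * a3 - a2)) * x ^ 2
            + (4 * (-a4) - (4 * a4 - a3)) * x ^ 3 + (-(-a4)) * x ^ 4) * Real.exp (-x)
        + ((2 * b2 - 2 * b1) - 2 * (b1 - 2 * b0) + (2 * (-b2 * 2) - 2 * (2 * b2 - 2 * b1)) * x
            + (-2 * (-b2 * 2)) * x ^ 2) * Real.exp (-2 * x)
        + (-3 * (-3 * (L5 / 6))) * Real.exp (-3 * x)) x := by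
    intro x
    rw [hD1]
    exact hasDerivAt_G (a1 - a0) (2 * a2 - a1) (3 * a3 - a2) (4 * a4 - a3) (-a4)
      (b1 - 2 * b0) (2 * b2 - 2 * b1) (-b2 * 2) (-3 * (L5 / 6)) x
  refine ⟨fun η _ => ?_, ?_, ?_⟩
  · rw [(hd2 η).deriv, (hd1 η).deriv, ha0, ha1, ha2, ha3, ha4, hb0, hb1, hb2]
    ring
  · rw [hh 0]
    norm_num
  · rw [hfun]
    have t0 : Tendsto (fun x : ℝ => Real.exp (-x)) atTop (nhds 0) :=
      Real.tendsto_exp_neg_atTop_nhds_zero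
    have tm : ∀ (k : ℝ) (n : ℕ), Tendsto (fun x : ℝ => k * x ^ n * Real.exp (-x)) atTop (nhds 0) := by
      intro k n
      have := (Real.tendsto_pow_mul_exp_neg_atTop_nhds_zero n).const_mul k
      simpa [mul_assoc] using this
    have tm2 : ∀ (k : ℝ) (n : ℕ), Tendsto (fun x : ℝ => k * x ^ n * Real.exp (-2 * x)) atTop (nhds 0) := by
      intro k n
      have := (tm k n).mul t0
      rw [mul_zero] at this
      refine this.congr fun x => ?_
      rw [mul_assoc, ← Real.exp_add]
      ring_nf
    have tm3 : ∀ (k : ℝ), Tendsto (fun x : ℝ => k * Real.exp (-3 * x)) atTop (nhds 0) := by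
      intro k
      have := ((tm2 k 0).mul t0)
      rw [mul_zero] at this
      refine this.congr fun x => ?_
      rw [mul_assoc, ← Real.exp_add]
      ring_nf
    have T := (((((((((tm a0 0).add (tm a1 1)).add (tm a2 2)).add (tm a3 3)).add
        (tm a4 4)).add (tm2 b0 0)).add (tm2 b1 1)).add (tm2 b2 2)).add (tm3 (L5 / 6)))
    simp only [add_zero] at T
    refine T.congr fun x => ?_
    ring
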